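/- Let p be a prime and R a perfect 𝔽_p-algebra. Equip W(R) with the normalized p-adic norm, and let β be a multiplicative seminorm on W(R) bounded above by this norm. Define μ(β) : R → ℝ≥0 by μ(β)(x) = β([x]), where [·] is the Teichmüller map. Then μ(β) is a multiplicative seminorm on R bounded above by the trivial norm. -/

import Mathlib

open scoped NNReal

/-- A multiplicative (nonarchimedean) seminorm on a commutative ring. -/
def IsMultSeminorm {A : Type*} [CommRing A] (α : A → ℝ≥0) : Prop :=
  α 0 = 0 ∧ (∀ g h : A, α (g - h) ≤ max (α g) (α h)) ∧
    α 1 = 1 ∧ ∀ g h : A, α (g * h) = α g * α h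

/-- The trivial norm on a ring: `0 ↦ 0` and every nonzero element to `1`. -/
noncomputable def trivialNorm {A : Type*} [CommRing A] (a : A) : ℝ≥0 :=
  open scoped Classical in
  if a = 0 then 0 else 1

/-- For `R` a perfect `𝔽_p`-algebra and `x ∈ W(R)` with Teichmüller expansion
`x = ∑_{i≥0} p^i [x_i]`, this is `x_i`: the unique `p^i`-th root in `R` of the
`i`-th Witt coordinate of `x`. -/
noncomputable def teichCoeff (p : ℕ) [Fact p.Prime] {R : Type*} [CommRing R]
    [ExpChar R p] [PerfectRing R p] (x : WittVector p R) (i : ℕ) : R :=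
  (⇑(frobeniusEquiv R p).symm)^[i] (x.coeff i)

/-- The normalized `p`-adic norm on `W(R)`: it sends `0` to `0` and a nonzero
`x = ∑ p^i [x_i]` to `p^{-j}`, where `j` is the least index with `x_j ≠ 0`. -/
noncomputable def padicNormWitt (p : ℕ) [Fact p.Prime] {R : Type*} [CommRing R]
    [ExpChar R p] [PerfectRing R p] (x : WittVector p R) : ℝ≥0 :=
  ⨆ i : ℕ, (p : ℝ≥0)⁻¹ ^ i * trivialNorm (teichCoeff p x i)

/-- The map `λ` on seminorms: `λ(α)(∑ p^i [x_i]) = sup_i p^{-i} α(x_i)`. -/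
noncomputable def lambdaSeminorm (p : ℕ) [Fact p.Prime] {R : Type*} [CommRing R]
    [ExpChar R p] [PerfectRing R p] (α : R → ℝ≥0) (x : WittVector p R) : ℝ≥0 :=
  ⨆ i : ℕ, (p : ℝ≥0)⁻¹ ^ i * α (teichCoeff p x i)

/-- The map `μ` on seminorms: `μ(β)(x) = β([x])`, with `[·]` the Teichmüller map. -/
noncomputable def muSeminorm (p : ℕ) [Fact p.Prime] {R : Type*} [CommRing R]
    (β : WittVector p R → ℝ≥0) (x : R) : ℝ≥0 :=
  β (WittVector.teichmuller p x)

/-!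
Everything except the strong triangle inequality is immediate from `[·]` being multiplicative.
Since `[g - h] ≡ [g] - [h] mod p` and `β` is bounded by the `p`-adic norm,
`μ(g - h) ≤ max (μ g) (μ h) p⁻¹`. Applying this to the `p^n`-th roots of `g` and `h` and using
multiplicativity of `β` gives `μ(g - h) ≤ max (μ g) (μ h) (p⁻¹ ^ p ^ n)`; now let `n → ∞`.
-/

open Filter Topology

theorem IsMultSeminorm.map_pow {A : Type*} [CommRing A] {α : A → ℝ≥0} (hα : IsMultSeminorm α)
    (x : A) (n : ℕ) : α (x ^ n) = α x ^ n := by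
  induction n with
  | zero => simpa using hα.2.2.1
  | succ n ih => rw [pow_succ, hα.2.2.2, ih, pow_succ]

theorem trivialNorm_le_one {A : Type*} [CommRing A] (a : A) : trivialNorm a ≤ 1 := by
  unfold trivialNorm; split <;> simp

section Witt

variable (p : ℕ) [Fact p.Prime] {R : Type*} [CommRing R] [ExpChar R p] [PerfectRing R p]

theorem padicNormWitt_teichmuller_le (x : R) :
    padicNormWitt p (WittVector.teichmuller p x) ≤ trivialNorm x := by
  refine ciSup_le fun i => ?_
  rcases i with _ | i
  · simp [teichCoeff, WittVector.teichmuller_coeff_zero]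
  · simp [teichCoeff, WittVector.teichmuller_coeff_pos p x (i + 1) i.succ_pos, trivialNorm]

theorem padicNormWitt_le_inv_of_coeff_zero {z : WittVector p R} (hz : z.coeff 0 = 0) :
    padicNormWitt p z ≤ (p : ℝ≥0)⁻¹ := by
  have hp : (p : ℝ≥0)⁻¹ ≤ 1 := inv_le_one_of_one_le₀ (mod_cast (Fact.out : p.Prime).one_le)
  refine ciSup_le fun i => ?_
  rcases i with _ | i
  · simp [teichCoeff, hz, trivialNorm]
  · calc (p : ℝ≥0)⁻¹ ^ (i + 1) * trivialNorm (teichCoeff p z (i + 1))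
        ≤ (p : ℝ≥0)⁻¹ ^ (i + 1) := mul_le_of_le_one_right zero_le (trivialNorm_le_one _)
      _ ≤ (p : ℝ≥0)⁻¹ := pow_le_of_le_one zero_le hp i.succ_ne_zero

variable {β : WittVector p R → ℝ≥0}

theorem muSeminorm_eq_pow_symm_iterateFrobeniusEquiv (hβ : IsMultSeminorm β) (n : ℕ) (x : R) :
    muSeminorm p β x = muSeminorm p β ((iterateFrobeniusEquiv R p n).symm x) ^ p ^ n := by
  conv_lhs => rw [← (iterateFrobeniusEquiv R p n).apply_symm_apply x, iterateFrobeniusEquiv_def]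
  rw [muSeminorm, map_pow, hβ.map_pow, muSeminorm]

theorem muSeminorm_sub_le_max_inv (hsub : ∀ g h, β (g - h) ≤ max (β g) (β h))
    (hβb : ∀ x : WittVector p R, β x ≤ padicNormWitt p x) (g h : R) :
    muSeminorm p β (g - h) ≤ max (max (muSeminorm p β g) (muSeminorm p β h)) (p : ℝ≥0)⁻¹ := by
  set t := WittVector.teichmuller p g - WittVector.teichmuller p h
  set z := t - WittVector.teichmuller p (g - h)
  have hz : z.coeff 0 = 0 := by
    rw [← WittVector.constantCoeff_apply, map_sub, map_sub]
    simp only [WittVector.constantCoeff_apply, WittVector.teichmuller_coeff_zero, sub_self]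
  calc muSeminorm p β (g - h) = β (t - z) := by rw [muSeminorm, sub_sub_cancel]
    _ ≤ max (β t) (β z) := hsub t z
    _ ≤ _ := max_le_max (hsub _ _) ((hβb z).trans (padicNormWitt_le_inv_of_coeff_zero p hz))

theorem muSeminorm_sub_le_max_inv_pow (hβ : IsMultSeminorm β)
    (hβb : ∀ x : WittVector p R, β x ≤ padicNormWitt p x) (g h : R) (n : ℕ) :
    muSeminorm p β (g - h)
      ≤ max (max (muSeminorm p β g) (muSeminorm p β h)) ((p : ℝ≥0)⁻¹ ^ p ^ n) := by
  set ψ := (iterateFrobeniusEquiv R p n).symm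
  have hmono := pow_left_mono (M := ℝ≥0) (p ^ n)
  calc muSeminorm p β (g - h) = muSeminorm p β (ψ g - ψ h) ^ p ^ n := by
        rw [← map_sub]; exact muSeminorm_eq_pow_symm_iterateFrobeniusEquiv p hβ n _
    _ ≤ max (max (muSeminorm p β (ψ g)) (muSeminorm p β (ψ h))) (p : ℝ≥0)⁻¹ ^ p ^ n :=
        hmono (muSeminorm_sub_le_max_inv p hβ.2.1 hβb _ _)
    _ = _ := by
        rw [hmono.map_max, hmono.map_max, ← muSeminorm_eq_pow_symm_iterateFrobeniusEquiv p hβ n g,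
          ← muSeminorm_eq_pow_symm_iterateFrobeniusEquiv p hβ n h]

end Witt

theorem muSeminorm_isMultSeminorm (p : ℕ) [Fact p.Prime] {R : Type*}
    [CommRing R] [ExpChar R p] [PerfectRing R p]
    (β : WittVector p R → ℝ≥0) (hβ : IsMultSeminorm β)
    (hβb : ∀ x : WittVector p R, β x ≤ padicNormWitt p x) :
    IsMultSeminorm (muSeminorm p β) ∧ ∀ r : R, muSeminorm p β r ≤ trivialNorm r := by
  refine ⟨⟨?_, fun g h => ?_, ?_, fun g h => ?_⟩, fun r => ?_⟩
  · rw [muSeminorm, WittVector.teichmuller_zero, hβ.1]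
  · have hp : (p : ℝ≥0)⁻¹ < 1 := inv_lt_one_of_one_lt₀ (mod_cast (Fact.out : p.Prime).one_lt)
    have hlim : Tendsto (fun n : ℕ => max (max (muSeminorm p β g) (muSeminorm p β h))
        ((p : ℝ≥0)⁻¹ ^ p ^ n)) atTop (𝓝 (max (max (muSeminorm p β g) (muSeminorm p β h)) 0)) :=
      tendsto_const_nhds.max ((NNReal.tendsto_pow_atTop_nhds_zero_of_lt_one hp).comp
        (tendsto_pow_atTop_atTop_of_one_lt (Fact.out : p.Prime).one_lt))
    simpa using ge_of_tendsto' hlim (muSeminorm_sub_le_max_inv_pow p hβ hβb g h)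
  · rw [muSeminorm, map_one, hβ.2.2.1]
  · rw [muSeminorm, map_mul, hβ.2.2.2, muSeminorm, muSeminorm]
  · exact (hβb _).trans (padicNormWitt_teichmuller_le p r)
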